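/- Let R be an n×n Hermitian matrix partitioned as R = [[B, C*], [C, D]] with B of size s×s (0 < s < n). Then R is positive semidefinite if and only if: (1) B is positive semidefinite, (2) null(B) ⊆ null(C), and (3) D − C B† C* is positive semidefinite, where B† is the Moore–Penrose pseudoinverse of B. -/

import Mathlib

/-!
If `ker B ⊆ ker C` then `C B† B = C`, since `v - B† B v ∈ ker B` for every `v`. With this identity the
quadratic form of `R` completes the square exactly as when `B` is invertible:
`(x, y)* R (x, y) = (x + B† C* y)* B (x + B† C* y) + y* (D - C B† C*) y`,
so `R ⪰ 0` iff `B ⪰ 0` and the Schur complement is `⪰ 0`. Conversely `R ⪰ 0` forces `ker B ⊆ ker C`: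
if `B v = 0` the form of `R` vanishes at `(v, 0)`, hence `R (v, 0) = (0, C v)` is zero.
-/

open Matrix
open scoped ComplexOrder

/-- `Xd` is the Moore–Penrose pseudoinverse of `X` (the four Penrose conditions). -/
def IsMoorePenroseInv {m n : Type*} [Fintype m] [Fintype n]
    (X : Matrix m n ℂ) (Xd : Matrix n m ℂ) : Prop :=
  X * Xd * X = X ∧ Xd * X * Xd = Xd ∧ (X * Xd)ᴴ = X * Xd ∧ (Xd * X)ᴴ = Xd * X

namespace IsMoorePenroseInv

variable {m n : Type*} [Fintype m] [Fintype n] {X : Matrix m n ℂ} {Y Z : Matrix n m ℂ}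

theorem conjTranspose (h : IsMoorePenroseInv X Y) : IsMoorePenroseInv Xᴴ Yᴴ := by
  obtain ⟨h₁, h₂, h₃, h₄⟩ := h
  refine ⟨?_, ?_, ?_, ?_⟩
  · rw [← conjTranspose_mul, ← conjTranspose_mul, ← Matrix.mul_assoc, h₁]
  · rw [← conjTranspose_mul, ← conjTranspose_mul, ← Matrix.mul_assoc, h₂]
  · rw [← conjTranspose_mul, conjTranspose_conjTranspose, h₄]
  · rw [← conjTranspose_mul, conjTranspose_conjTranspose, h₃]

theorem unique (hY : IsMoorePenroseInv X Y) (hZ : IsMoorePenroseInv X Z) : Y = Z := by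
  have hXY : Xᴴ * Yᴴ * Xᴴ = Xᴴ := hY.conjTranspose.1
  have hXZ : Xᴴ * Zᴴ * Xᴴ = Xᴴ := hZ.conjTranspose.1
  obtain ⟨-, hY₂, hY₃, hY₄⟩ := hY
  obtain ⟨-, hZ₂, hZ₃, hZ₄⟩ := hZ
  calc Y = Y * (X * Y)ᴴ := by rw [hY₃, ← Matrix.mul_assoc, hY₂]
    _ = Y * (X * Y)ᴴ * (X * Z)ᴴ := by
      simp only [conjTranspose_mul, Matrix.mul_assoc, ← Matrix.mul_assoc Xᴴ, hXZ]
    _ = Y * X * Z := by rw [hY₃, hZ₃, ← Matrix.mul_assoc, ← Matrix.mul_assoc Y X Y, hY₂]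
    _ = (Y * X)ᴴ * (Z * X)ᴴ * Z := by rw [hY₄, hZ₄, Matrix.mul_assoc _ (Z * X), hZ₂]
    _ = Z := by
      simp only [conjTranspose_mul, ← Matrix.mul_assoc, hXY]
      rw [← conjTranspose_mul, hZ₄, hZ₂]

theorem isHermitian {X Y : Matrix n n ℂ} (h : IsMoorePenroseInv X Y) (hX : X.IsHermitian) :
    Y.IsHermitian :=
  h.conjTranspose.unique (by rwa [hX.eq])

end IsMoorePenroseInv

namespace Matrix

variable {k m n : Type*} [Fintype m] [Fintype n]

theorem mul_mul_eq_of_ker_le {R : Type*} [Ring R] {X : Matrix m n R}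
    {Y : Matrix n m R} (hXYX : X * Y * X = X) {C : Matrix k n R}
    (hker : ∀ v, X *ᵥ v = 0 → C *ᵥ v = 0) : C * Y * X = C := by
  have hproj (v : n → R) : C *ᵥ ((Y * X) *ᵥ v) = C *ᵥ v := by
    rw [eq_comm, ← sub_eq_zero, ← mulVec_sub]
    apply hker
    rw [mulVec_sub, mulVec_mulVec, ← Matrix.mul_assoc, hXYX, sub_self]
  refine ext_iff_mulVec.2 fun v => ?_
  rw [Matrix.mul_assoc, ← mulVec_mulVec, hproj]

theorem PosSemidef.mulVec_eq_zero_of_fromBlocks {𝕜 : Type*} [RCLike 𝕜] {A : Matrix m m 𝕜}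
    {B : Matrix m n 𝕜} {C : Matrix n m 𝕜} {D : Matrix n n 𝕜}
    (h : (fromBlocks A B C D).PosSemidef) {v : m → 𝕜} (hv : A *ᵥ v = 0) : C *ᵥ v = 0 := by
  have hzero : star (Sum.elim v 0) ⬝ᵥ (fromBlocks A B C D *ᵥ Sum.elim v 0) = 0 := by
    simp [fromBlocks_mulVec, Function.star_sumElim, sumElim_dotProduct_sumElim, hv]
  simpa [fromBlocks_mulVec] using congrArg (· ∘ Sum.inr) ((h.dotProduct_mulVec_zero_iff _).1 hzero)

theorem schur_complement_eq₁₁_of_mul_mul_eq {R : Type*} [CommRing R] [StarRing R]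
    {B Bd : Matrix m m R} (C : Matrix n m R) (D : Matrix n n R)
    (hB : B.IsHermitian) (hBd : Bd.IsHermitian) (hC : C * Bd * B = C) (x : m → R) (y : n → R) :
    star (Sum.elim x y) ⬝ᵥ (fromBlocks B Cᴴ C D *ᵥ Sum.elim x y) =
      star (x + (Bd * Cᴴ) *ᵥ y) ⬝ᵥ (B *ᵥ (x + (Bd * Cᴴ) *ᵥ y)) +
        star y ⬝ᵥ ((D - C * Bd * Cᴴ) *ᵥ y) := by
  have hBBdC : B * Bd * Cᴴ = Cᴴ := by
    simpa only [conjTranspose_mul, hB.eq, hBd.eq, Matrix.mul_assoc] using congrArg (·ᴴ) hC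
  simp only [Function.star_sumElim, fromBlocks_mulVec, sumElim_dotProduct_sumElim,
    star_add, star_mulVec, conjTranspose_mul, conjTranspose_conjTranspose, hBd.eq,
    add_dotProduct, dotProduct_add, mulVec_add, sub_mulVec, dotProduct_sub,
    dotProduct_mulVec, vecMul_vecMul, mulVec_mulVec, add_vecMul,
    Sum.elim_comp_inl, Sum.elim_comp_inr, ← Matrix.mul_assoc, hBBdC, hC]
  abel

theorem posSemidef_fromBlocks_iff_of_mul_mul_eq {R : Type*} [CommRing R] [PartialOrder R]
    [StarRing R] [StarOrderedRing R] {B Bd : Matrix m m R} {C : Matrix n m R} {D : Matrix n n R}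
    (hB : B.IsHermitian) (hD : D.IsHermitian) (hBd : Bd.IsHermitian) (hC : C * Bd * B = C) :
    (fromBlocks B Cᴴ C D).PosSemidef ↔ B.PosSemidef ∧ (D - C * Bd * Cᴴ).PosSemidef := by
  constructor
  · intro h
    refine ⟨h.submatrix Sum.inl,
      .of_dotProduct_mulVec_nonneg (hD.sub (isHermitian_mul_mul_conjTranspose C hBd)) fun y => ?_⟩
    simpa [schur_complement_eq₁₁_of_mul_mul_eq C D hB hBd hC] using
      h.dotProduct_mulVec_nonneg (Sum.elim (-((Bd * Cᴴ) *ᵥ y)) y)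
  · rintro ⟨hBpos, hS⟩
    refine .of_dotProduct_mulVec_nonneg
      (isHermitian_fromBlocks_iff.2 ⟨hB, conjTranspose_conjTranspose C, rfl, hD⟩) fun z => ?_
    rw [← Sum.elim_comp_inl_inr z, schur_complement_eq₁₁_of_mul_mul_eq C D hB hBd hC]
    exact add_nonneg (hBpos.dotProduct_mulVec_nonneg _) (hS.dotProduct_mulVec_nonneg _)

end Matrix

theorem posSemidef_blocks_iff_schur_general
    {s t : ℕ}
    (B : Matrix (Fin s) (Fin s) ℂ) (C : Matrix (Fin t) (Fin s) ℂ)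
    (D : Matrix (Fin t) (Fin t) ℂ)
    (hB : B.IsHermitian) (hD : D.IsHermitian)
    (Bd : Matrix (Fin s) (Fin s) ℂ) (hBd : IsMoorePenroseInv B Bd) :
    (fromBlocks B Cᴴ C D).PosSemidef ↔
      (B.PosSemidef ∧ (∀ v : Fin s → ℂ, B *ᵥ v = 0 → C *ᵥ v = 0) ∧
        (D - C * Bd * Cᴴ).PosSemidef) := by
  have hschur (hker : ∀ v, B *ᵥ v = 0 → C *ᵥ v = 0) :=
    posSemidef_fromBlocks_iff_of_mul_mul_eq hB hD (hBd.isHermitian hB)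
      (mul_mul_eq_of_ker_le hBd.1 hker)
  constructor
  · intro h
    have hker (v : Fin s → ℂ) : B *ᵥ v = 0 → C *ᵥ v = 0 := h.mulVec_eq_zero_of_fromBlocks
    obtain ⟨hBpos, hS⟩ := (hschur hker).1 h
    exact ⟨hBpos, hker, hS⟩
  · rintro ⟨hBpos, hker, hS⟩
    exact (hschur hker).2 ⟨hBpos, hS⟩

theorem posSemidef_blocks_iff_schur
    {s t : ℕ} (hs : 0 < s) (ht : 0 < t)
    (B : Matrix (Fin s) (Fin s) ℂ) (C : Matrix (Fin t) (Fin s) ℂ)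
    (D : Matrix (Fin t) (Fin t) ℂ)
    (hB : B.IsHermitian) (hD : D.IsHermitian)
    (Bd : Matrix (Fin s) (Fin s) ℂ) (hBd : IsMoorePenroseInv B Bd) :
    (fromBlocks B Cᴴ C D).PosSemidef ↔
      (B.PosSemidef ∧ (∀ v : Fin s → ℂ, B *ᵥ v = 0 → C *ᵥ v = 0) ∧
        (D - C * Bd * Cᴴ).PosSemidef) :=
  posSemidef_blocks_iff_schur_general B C D hB hD Bd hBd
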